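/- Let u : ℝ → ℝ be of class C⁴, fix x ∈ ℝ and κ ∈ ℝ. Then the difference of the interpolation jumps over the right face and the left face satisfies (uR(u,h) − uL(u,h)) − (uR⁻(u,h) − uL⁻(u,h)) = O(h⁴) as h → 0⁺, for every value of κ. -/

import Mathlib

open Asymptotics Filter Set MeasureTheory

noncomputable def uL (κ x : ℝ) (v : ℝ → ℝ) (h : ℝ) : ℝ :=
  (v x + v (x + h)) / 2 - ((1 - κ) / 4) * (v (x + h) - 2 * v x + v (x - h))

noncomputable def uR (κ x : ℝ) (v : ℝ → ℝ) (h : ℝ) : ℝ :=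
  (v (x + h) + v x) / 2 - ((1 - κ) / 4) * (v (x + 2 * h) - 2 * v (x + h) + v x)

/-- Left-face interpolated value from the left: same formula with `x` replaced by `x - h`. -/
noncomputable def uLm (κ x : ℝ) (v : ℝ → ℝ) (h : ℝ) : ℝ := uL κ (x - h) v h

/-- Left-face interpolated value from the right: same formula with `x` replaced by `x - h`. -/
noncomputable def uRm (κ x : ℝ) (v : ℝ → ℝ) (h : ℝ) : ℝ := uR κ (x - h) v h

/-!
The jump difference equals `-(1 - κ) / 4` times the fourth central difference
`u(x+2h) - 4u(x+h) + 6u(x) - 4u(x-h) + u(x-2h)`. This difference annihilates polynomials of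
degree `< 4` and sends the quartic Taylor polynomial of `u` at `x` to `u⁗(x) h⁴`, while the
Taylor remainder is `o(h⁴)` at each of the five nodes.
-/

open Topology

def fourthCentralDiff (v : ℝ → ℝ) (x h : ℝ) : ℝ :=
  v (x + 2 * h) - 4 * v (x + h) + 6 * v x - 4 * v (x - h) + v (x - 2 * h)

lemma fourthCentralDiff_sub (f g : ℝ → ℝ) (x h : ℝ) :
    fourthCentralDiff (f - g) x h = fourthCentralDiff f x h - fourthCentralDiff g x h := by
  simp only [fourthCentralDiff, Pi.sub_apply]
  ring

lemma fourthCentralDiff_taylorWithinEval (f : ℝ → ℝ) (s : Set ℝ) (x h : ℝ) :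
    fourthCentralDiff (taylorWithinEval f 4 s x) x h = iteratedDerivWithin 4 f s x * h ^ 4 := by
  simp only [fourthCentralDiff, taylor_within_apply, Finset.sum_range_succ,
    Finset.sum_range_zero, smul_eq_mul, Nat.factorial]
  push_cast
  ring

lemma fourthCentralDiff_isLittleO {r g : ℝ → ℝ} {l : Filter ℝ} {x : ℝ}
    (hr : ∀ a : ℝ, (fun h => r (x + a * h)) =o[l] g) : fourthCentralDiff r x =o[l] g := by
  refine ((((hr 2).sub ((hr 1).const_mul_left 4)).add ((hr 0).const_mul_left 6)).sub
    ((hr (-1)).const_mul_left 4)).add (hr (-2)) |>.congr_left fun h => ?_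
  simp only [fourthCentralDiff, one_mul, zero_mul, add_zero, neg_mul, ← sub_eq_add_neg]

lemma isLittleO_sub_taylorWithinEval_comp_mul {f : ℝ → ℝ} {n : ℕ} (hf : ContDiff ℝ n f)
    (x a : ℝ) :
    (fun h => (f - taylorWithinEval f n univ x) (x + a * h)) =o[𝓝 0] fun h => h ^ n := by
  have hlin : Tendsto (fun h : ℝ => x + a * h) (𝓝 0) (𝓝 x) :=
    Continuous.tendsto' (by fun_prop) 0 x (by simp)
  refine ((taylor_isLittleO_univ hf).comp_tendsto hlin).trans_isBigO ?_
  simpa [Function.comp_def, mul_pow] using isBigO_const_mul_self (a ^ n) (fun h : ℝ => h ^ n) (𝓝 0)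

lemma fourthCentralDiff_isBigO_pow_four {f : ℝ → ℝ} (hf : ContDiff ℝ 4 f) (x : ℝ) :
    fourthCentralDiff f x =O[𝓝 0] fun h => h ^ 4 := by
  have hrem := fourthCentralDiff_isLittleO (isLittleO_sub_taylorWithinEval_comp_mul hf x)
  have hpoly := isBigO_const_mul_self (iteratedDerivWithin 4 f univ x) (fun h : ℝ => h ^ 4) (𝓝 0)
  refine (hrem.isBigO.add hpoly).congr_left fun h => ?_
  rw [fourthCentralDiff_sub, fourthCentralDiff_taylorWithinEval]
  ring

lemma jump_difference_eq_fourthCentralDiff (κ x : ℝ) (v : ℝ → ℝ) (h : ℝ) :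
    (uR κ x v h - uL κ x v h) - (uRm κ x v h - uLm κ x v h)
      = -((1 - κ) / 4) * fourthCentralDiff v x h := by
  simp only [uR, uL, uRm, uLm, fourthCentralDiff, sub_add_cancel,
    show x - h + 2 * h = x + h by ring, show x - h - h = x - 2 * h by ring]
  ring

theorem quick_jump_difference_fourth_order (u : ℝ → ℝ) (hu : ContDiff ℝ 4 u) (x κ : ℝ) :
    (fun h : ℝ => (uR κ x u h - uL κ x u h) - (uRm κ x u h - uLm κ x u h))
      =O[nhdsWithin 0 (Set.Ioi 0)] fun h : ℝ => h ^ 4 := by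
  simp only [jump_difference_eq_fourthCentralDiff]
  exact ((fourthCentralDiff_isBigO_pow_four hu x).const_mul_left _).mono nhdsWithin_le_nhds
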